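/- With the notation of the linear MGT energy identity (τ u''' + u'' + c²Au + bAu' = f with f(t) ∈ H continuous), the perturbed identity holds: (d/dt)E₁(t) + γ‖u''(t)‖² = (f(t), u''(t) + (c²/b)u'(t)) for all t ∈ [0,T], where γ = 1 − τc²/b and E₁ is as defined above. -/

import Mathlib

open Set RealInnerProductSpace

/-!
Differentiating `E₁` term by term, `‖A^{1/2}v‖²` contributes `2(Av, v')`. Pairing the equation
with `u''` and with `(c²/b)u'` and adding reproduces every term of `E₁'` except `‖u''‖²`, which
occurs with coefficient `τc²/b` in `E₁'` and `1` in the pairing; hence the defect `γ‖u''‖²`.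
The identity therefore holds along every smooth trajectory, with `f` read off as
`τu''' + u'' + c²Au + bAu'`.
-/

section MGTEnergy

variable {H : Type*} [NormedAddCommGroup H] [InnerProductSpace ℝ H]

theorem LinearMap.IsSymmetric.hasDerivAt_comp [CompleteSpace H] {T : H →ₗ[ℝ] H}
    (hT : T.IsSymmetric) {v : ℝ → H} {v' : H} {t : ℝ} (hv : HasDerivAt v v' t) :
    HasDerivAt (fun s => T (v s)) (T v') t :=
  (⟨T, hT.continuous⟩ : H →L[ℝ] H).hasFDerivAt.comp_hasDerivAt t hv

theorem inner_apply_apply_of_comp_eq {S T : H →ₗ[ℝ] H} (hS : S.IsSymmetric)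
    (hST : ∀ x, S (S x) = T x) (x y : H) : ⟪S x, S y⟫ = ⟪x, T y⟫ := by
  rw [hS, hST]

/-- `E₁` at the state `(x, x₁, x₂) = (u, u', u'')`, with `Asq` in the role of `A^{1/2}`. -/
noncomputable def mgtEnergy (A Asq : H →ₗ[ℝ] H) (τ b csq : ℝ) (x x₁ x₂ : H) : ℝ :=
  τ / 2 * ‖x₂‖ ^ 2 + b / 2 * ‖Asq x₁‖ ^ 2 + csq * ⟪A x, x₁⟫ +
    csq ^ 2 / (2 * b) * ‖Asq x‖ ^ 2 + (τ * csq / b) * ⟪x₂, x₁⟫ + csq / (2 * b) * ‖x₁‖ ^ 2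

theorem hasDerivAt_mgtEnergy [CompleteSpace H] {A Asq : H →ₗ[ℝ] H} (hA : A.IsSymmetric)
    (hAsq : Asq.IsSymmetric) (hAsqSq : ∀ x, Asq (Asq x) = A x) {τ b csq : ℝ} (hb : b ≠ 0)
    {u u₁ u₂ : ℝ → H} {u₃ : H} {t : ℝ} (hu : HasDerivAt u (u₁ t) t)
    (hu₁ : HasDerivAt u₁ (u₂ t) t) (hu₂ : HasDerivAt u₂ u₃ t) :
    HasDerivAt (fun s => mgtEnergy A Asq τ b csq (u s) (u₁ s) (u₂ s))
      (-(1 - τ * csq / b) * ‖u₂ t‖ ^ 2 +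
        ⟪τ • u₃ + u₂ t + csq • A (u t) + b • A (u₁ t), u₂ t + (csq / b) • u₁ t⟫) t := by
  have hD := (((((hu₂.norm_sq.const_mul (τ / 2)).add
    ((hAsq.hasDerivAt_comp hu₁).norm_sq.const_mul (b / 2))).add
    (((hA.hasDerivAt_comp hu).inner ℝ hu₁).const_mul csq)).add
    ((hAsq.hasDerivAt_comp hu).norm_sq.const_mul (csq ^ 2 / (2 * b)))).add
    ((hu₂.inner ℝ hu₁).const_mul (τ * csq / b))).add
    (hu₁.norm_sq.const_mul (csq / (2 * b)))
  refine hD.congr_deriv ?_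
  simp only [inner_apply_apply_of_comp_eq hAsq hAsqSq, inner_add_left, inner_add_right,
    real_inner_smul_left, real_inner_smul_right, hA (u t), hA (u₁ t),
    real_inner_self_eq_norm_sq]
  rw [real_inner_comm (u₂ t) u₃, real_inner_comm (u₁ t) (u₂ t)]
  field_simp
  ring

end MGTEnergy

theorem stmt_10_general {H : Type*} [NormedAddCommGroup H] [InnerProductSpace ℝ H]
    [CompleteSpace H]
    (A Asq : H →ₗ[ℝ] H)
    (hAsym : ∀ u v : H, ⟪A u, v⟫ = ⟪u, A v⟫)
    (hAsqSym : ∀ u v : H, ⟪Asq u, v⟫ = ⟪u, Asq v⟫)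
    (hAsqSq : ∀ u : H, Asq (Asq u) = A u)
    (τ b csq : ℝ) (hb : 0 < b)
    (T : ℝ)
    (u u1 u2 u3 : ℝ → H)
    (hu : ∀ t, HasDerivAt u (u1 t) t)
    (hu1 : ∀ t, HasDerivAt u1 (u2 t) t)
    (hu2 : ∀ t, HasDerivAt u2 (u3 t) t)
    (f : ℝ → H)
    (heq : ∀ t ∈ Icc (0:ℝ) T,
      τ • u3 t + u2 t + csq • A (u t) + b • A (u1 t) = f t) :
    ∀ t ∈ Icc (0:ℝ) T,
      HasDerivAt (fun s =>
          τ / 2 * ‖u2 s‖ ^ 2 + b / 2 * ‖Asq (u1 s)‖ ^ 2 + csq * ⟪A (u s), u1 s⟫ +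
          csq ^ 2 / (2 * b) * ‖Asq (u s)‖ ^ 2 + (τ * csq / b) * ⟪u2 s, u1 s⟫ +
          csq / (2 * b) * ‖u1 s‖ ^ 2)
        (-(1 - τ * csq / b) * ‖u2 t‖ ^ 2 + ⟪f t, u2 t + (csq / b) • u1 t⟫) t := by
  intro t ht
  rw [← heq t ht]
  exact hasDerivAt_mgtEnergy hAsym hAsqSym hAsqSq hb.ne' (hu t) (hu1 t) (hu2 t)

/-- Energy identity for the linear MGT equation `τu''' + u'' + c²Au + bAu' = f`:
with `E₁` as below one has `(d/dt)E₁(t) + γ‖u''(t)‖² = (f, u'' + (c²/b)u')`, `γ = 1 − τc²/b`.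
`A` is a positive symmetric operator and `Asq` plays the role of `A^{1/2}`
(symmetric, positive, with `Asq ∘ Asq = A`). -/
theorem stmt_10 {H : Type*} [NormedAddCommGroup H] [InnerProductSpace ℝ H]
    [CompleteSpace H]
    (A Asq : H →ₗ[ℝ] H)
    (hAsym : ∀ u v : H, ⟪A u, v⟫ = ⟪u, A v⟫)
    (hApos : ∀ u : H, 0 ≤ ⟪A u, u⟫)
    (hAsqSym : ∀ u v : H, ⟪Asq u, v⟫ = ⟪u, Asq v⟫)
    (hAsqPos : ∀ u : H, 0 ≤ ⟪Asq u, u⟫)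
    (hAsqSq : ∀ u : H, Asq (Asq u) = A u)
    (τ b csq : ℝ) (hτ : 0 < τ) (hb : 0 < b) (hcsq : 0 < csq)
    (T : ℝ) (hT : 0 < T)
    (u u1 u2 u3 : ℝ → H)
    (hu : ∀ t, HasDerivAt u (u1 t) t)
    (hu1 : ∀ t, HasDerivAt u1 (u2 t) t)
    (hu2 : ∀ t, HasDerivAt u2 (u3 t) t)
    (hu3c : Continuous u3)
    (f : ℝ → H) (hf : Continuous f)
    (heq : ∀ t ∈ Icc (0:ℝ) T,
      τ • u3 t + u2 t + csq • A (u t) + b • A (u1 t) = f t) :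
    ∀ t ∈ Icc (0:ℝ) T,
      HasDerivAt (fun s =>
          τ / 2 * ‖u2 s‖ ^ 2 + b / 2 * ‖Asq (u1 s)‖ ^ 2 + csq * ⟪A (u s), u1 s⟫ +
          csq ^ 2 / (2 * b) * ‖Asq (u s)‖ ^ 2 + (τ * csq / b) * ⟪u2 s, u1 s⟫ +
          csq / (2 * b) * ‖u1 s‖ ^ 2)
        (-(1 - τ * csq / b) * ‖u2 t‖ ^ 2 + ⟪f t, u2 t + (csq / b) • u1 t⟫) t :=
  stmt_10_general A Asq hAsym hAsqSym hAsqSq τ b csq hb T u u1 u2 u3 hu hu1 hu2 f heq
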